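/- arXiv:1507.01711 — 4 statements merged into one kernel-verified Lean document; each statement's English description precedes it below -/
import Mathlib

section
/- Let X, Y be real Hilbert spaces, F : X → Y, z ∈ Y, δ ≥ 0, γ*, γᵏ ∈ X, and T : X → Y a bounded linear operator (playing the role of F′(γᵏ)). Assume: (i) ‖F(γ*) − z‖ ≤ δ; (ii) ‖T(γ* − γᵏ) − (F(γ*) − F(γᵏ))‖ ≤ c₁‖γ* − γᵏ‖²; (iii) ‖F(γᵏ) − F(γ*)‖ ≤ L‖γᵏ − γ*‖; and set βₖ = ‖F(γᵏ) − z‖². If γ^{k+1} minimizes J(γ) = ‖T(γ − γᵏ) − (z − F(γᵏ))‖² + βₖ‖γ − γᵏ‖² over a set K containing γ*, then ‖T(γ^{k+1} − γᵏ) − (z − F(γᵏ))‖ ≤ c₃(‖γᵏ − γ*‖² + δ), where c₃ = √(max{2c₁² + 2L² + 1, 3}), provided ‖γᵏ − γ*‖ ≤ 1 and δ ≤ 1. -/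
lemma stmt1_aux {M c₁ L e δ A : ℝ} (he0 : 0 ≤ e) (hδ0 : 0 ≤ δ) (he1 : e ≤ 1) (hδ1 : δ ≤ 1)
    (hM3 : 3 ≤ M) (hMc : 2 * c₁ ^ 2 + 2 * L ^ 2 + 1 ≤ M)
    (hkey : A ^ 2 ≤ (c₁ * e ^ 2 + δ) ^ 2 + (L * e + δ) ^ 2 * e ^ 2) :
    A ^ 2 ≤ M * (e ^ 2 + δ) ^ 2 := by
  have h1 : 2 * (c₁ * δ * e ^ 2) ≤ c₁ ^ 2 * e ^ 4 + δ ^ 2 := by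
    nlinarith [sq_nonneg (c₁ * e ^ 2 - δ)]
  have h2 : 2 * (L * δ * e ^ 3) ≤ L ^ 2 * e ^ 4 + δ ^ 2 * e ^ 2 := by
    nlinarith [sq_nonneg (L * e ^ 2 - δ * e)]
  have h3 : (2 * c₁ ^ 2 + 2 * L ^ 2 + 1) * e ^ 4 ≤ M * e ^ 4 :=
    mul_le_mul_of_nonneg_right hMc (by positivity)
  have h5 : 2 * δ ^ 2 * e ^ 2 ≤ 2 * δ * e ^ 2 := by
    nlinarith [mul_nonneg (mul_nonneg hδ0 (sub_nonneg.2 hδ1)) (sq_nonneg e)]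
  have h6 : (0:ℝ) ≤ δ * e ^ 2 := by positivity
  have h7 : (0:ℝ) ≤ δ ^ 2 := sq_nonneg δ
  nlinarith [hkey, h1, h2, h3, h5, mul_le_mul_of_nonneg_right hM3 h6,
    mul_le_mul_of_nonneg_right hM3 h7, sq_nonneg (e ^ 2)]

theorem stmt1 {X Y : Type*} [NormedAddCommGroup X] [InnerProductSpace ℝ X] [CompleteSpace X]
    [NormedAddCommGroup Y] [InnerProductSpace ℝ Y] [CompleteSpace Y]
    (F : X → Y) (T : X →L[ℝ] Y) (z : Y) (δ c₁ L : ℝ)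
    (γstar γk γk1 : X) (K : Set X)
    (hδ0 : 0 ≤ δ) (hδ1 : δ ≤ 1)
    (hnoise : ‖F γstar - z‖ ≤ δ)
    (htaylor : ‖T (γstar - γk) - (F γstar - F γk)‖ ≤ c₁ * ‖γstar - γk‖ ^ 2)
    (hlip : ‖F γk - F γstar‖ ≤ L * ‖γk - γstar‖)
    (hsmall : ‖γk - γstar‖ ≤ 1)
    (hγstarK : γstar ∈ K) (hγk1K : γk1 ∈ K)
    (hmin : ∀ γ ∈ K,
      ‖T (γk1 - γk) - (z - F γk)‖ ^ 2 + ‖F γk - z‖ ^ 2 * ‖γk1 - γk‖ ^ 2 ≤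
        ‖T (γ - γk) - (z - F γk)‖ ^ 2 + ‖F γk - z‖ ^ 2 * ‖γ - γk‖ ^ 2) :
    ‖T (γk1 - γk) - (z - F γk)‖ ≤
      Real.sqrt (max (2 * c₁ ^ 2 + 2 * L ^ 2 + 1) 3) * (‖γk - γstar‖ ^ 2 + δ) := by
  set e := ‖γk - γstar‖ with he
  set A := ‖T (γk1 - γk) - (z - F γk)‖ with hA
  set M := max (2 * c₁ ^ 2 + 2 * L ^ 2 + 1) 3 with hM
  have he0 : 0 ≤ e := norm_nonneg _
  have hA0 : 0 ≤ A := norm_nonneg _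
  have hrev : ‖γstar - γk‖ = e := norm_sub_rev _ _
  -- bound on J(γ*) first term
  have h2 : ‖T (γstar - γk) - (z - F γk)‖ ≤ c₁ * e ^ 2 + δ := by
    have : T (γstar - γk) - (z - F γk)
        = (T (γstar - γk) - (F γstar - F γk)) + (F γstar - z) := by abel
    rw [this]
    calc ‖(T (γstar - γk) - (F γstar - F γk)) + (F γstar - z)‖
        ≤ ‖T (γstar - γk) - (F γstar - F γk)‖ + ‖F γstar - z‖ := norm_add_le _ _
      _ ≤ c₁ * e ^ 2 + δ := by rw [← hrev]; exact add_le_add htaylor hnoise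
  -- bound on β
  have h3 : ‖F γk - z‖ ≤ L * e + δ := by
    have : F γk - z = (F γk - F γstar) + (F γstar - z) := by abel
    rw [this]
    exact (norm_add_le _ _).trans (add_le_add hlip hnoise)
  have h2' : ‖T (γstar - γk) - (z - F γk)‖ ^ 2 ≤ (c₁ * e ^ 2 + δ) ^ 2 :=
    pow_le_pow_left₀ (norm_nonneg _) h2 2
  have h3' : ‖F γk - z‖ ^ 2 ≤ (L * e + δ) ^ 2 :=
    pow_le_pow_left₀ (norm_nonneg _) h3 2
  have h1 := hmin γstar hγstarK
  have hβk1 : 0 ≤ ‖F γk - z‖ ^ 2 * ‖γk1 - γk‖ ^ 2 := by positivity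
  have hkey : A ^ 2 ≤ (c₁ * e ^ 2 + δ) ^ 2 + (L * e + δ) ^ 2 * e ^ 2 := by
    have hstar : ‖γstar - γk‖ ^ 2 = e ^ 2 := by rw [hrev]
    have hβ : ‖F γk - z‖ ^ 2 * ‖γstar - γk‖ ^ 2 ≤ (L * e + δ) ^ 2 * e ^ 2 := by
      rw [hstar]; exact mul_le_mul_of_nonneg_right h3' (by positivity)
    nlinarith [h1, h2', hβ, hβk1]
  have hM3 : (3 : ℝ) ≤ M := le_max_right _ _
  have hMc : 2 * c₁ ^ 2 + 2 * L ^ 2 + 1 ≤ M := le_max_left _ _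
  have hM0 : 0 ≤ M := by linarith
  have hfinal : A ^ 2 ≤ M * (e ^ 2 + δ) ^ 2 :=
    stmt1_aux he0 hδ0 hsmall hδ1 hM3 hMc hkey
  have hrhs0 : 0 ≤ Real.sqrt M * (e ^ 2 + δ) := by positivity
  have : A ^ 2 ≤ (Real.sqrt M * (e ^ 2 + δ)) ^ 2 := by
    rw [mul_pow, Real.sq_sqrt hM0]; exact hfinal
  exact (pow_le_pow_iff_left₀ hA0 hrhs0 two_ne_zero).mp this
end

section
/- Let X, Y be real Hilbert spaces, F : X → Y, z ∈ Y, δ > 0, γ*, γᵏ ∈ X, and T : X → Y bounded linear. Assume: (i) ‖F(γ*) − z‖ ≤ δ; (ii) ‖T(γ* − γᵏ) − (F(γ*) − F(γᵏ))‖ ≤ c₁‖γ* − γᵏ‖²; (iii) ‖F(γᵏ) − z‖ ≥ (c₂/2)‖γᵏ − γ*‖ with c₂ > 0; (iv) ‖F(γᵏ) − z‖ ≥ √δ; and set βₖ = ‖F(γᵏ) − z‖². If γ^{k+1} minimizes J(γ) = ‖T(γ − γᵏ) − (z − F(γᵏ))‖² + βₖ‖γ − γᵏ‖² over a set K containing γ*,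 then ‖γ^{k+1} − γᵏ‖² ≤ c₄(‖γᵏ − γ*‖² + δ), where c₄ = max{8c₁²/c₂² + 1, 2}, provided ‖γᵏ − γ*‖ ≤ 1. -/
set_option maxHeartbeats 1000000 in
theorem stmt2 {X Y : Type*} [NormedAddCommGroup X] [InnerProductSpace ℝ X] [CompleteSpace X]
    [NormedAddCommGroup Y] [InnerProductSpace ℝ Y] [CompleteSpace Y]
    (F : X → Y) (T : X →L[ℝ] Y) (z : Y) (δ c₁ c₂ : ℝ)
    (γstar γk γk1 : X) (K : Set X)
    (hδ : 0 < δ) (hc₂ : 0 < c₂)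
    (hnoise : ‖F γstar - z‖ ≤ δ)
    (htaylor : ‖T (γstar - γk) - (F γstar - F γk)‖ ≤ c₁ * ‖γstar - γk‖ ^ 2)
    (hlower : (c₂ / 2) * ‖γk - γstar‖ ≤ ‖F γk - z‖)
    (hlower' : Real.sqrt δ ≤ ‖F γk - z‖)
    (hsmall : ‖γk - γstar‖ ≤ 1)
    (hγstarK : γstar ∈ K) (hγk1K : γk1 ∈ K)
    (hmin : ∀ γ ∈ K,
      ‖T (γk1 - γk) - (z - F γk)‖ ^ 2 + ‖F γk - z‖ ^ 2 * ‖γk1 - γk‖ ^ 2 ≤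
        ‖T (γ - γk) - (z - F γk)‖ ^ 2 + ‖F γk - z‖ ^ 2 * ‖γ - γk‖ ^ 2) :
    ‖γk1 - γk‖ ^ 2 ≤ max (8 * c₁ ^ 2 / c₂ ^ 2 + 1) 2 * (‖γk - γstar‖ ^ 2 + δ) := by
  set b := ‖F γk - z‖ with hbdef
  set d := ‖γk - γstar‖ with hddef
  set M := max (8 * c₁ ^ 2 / c₂ ^ 2 + 1) 2 with hMdef
  have hd0 : 0 ≤ d := norm_nonneg _
  have hb0 : 0 < b := lt_of_lt_of_le (Real.sqrt_pos.mpr hδ) hlower'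
  have hb2 : δ ≤ b ^ 2 := by
    have := Real.sq_sqrt hδ.le
    nlinarith [Real.sqrt_nonneg δ]
  have hcd : (c₂ ^ 2 / 4) * d ^ 2 ≤ b ^ 2 := by
    nlinarith [mul_le_mul hlower hlower (by positivity) hb0.le]
  have hdrev : ‖γstar - γk‖ = d := norm_sub_rev _ _
  have hT : ‖T (γstar - γk) - (z - F γk)‖ ≤ c₁ * d ^ 2 + δ := by
    have heq : T (γstar - γk) - (z - F γk) =
        (T (γstar - γk) - (F γstar - F γk)) + (F γstar - z) := by abel
    rw [heq]
    calc ‖(T (γstar - γk) - (F γstar - F γk)) + (F γstar - z)‖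
        ≤ ‖T (γstar - γk) - (F γstar - F γk)‖ + ‖F γstar - z‖ := norm_add_le _ _
      _ ≤ c₁ * d ^ 2 + δ := by rw [← hdrev]; linarith
  have hmain : b ^ 2 * ‖γk1 - γk‖ ^ 2 ≤ (c₁ * d ^ 2 + δ) ^ 2 + b ^ 2 * d ^ 2 := by
    have h := hmin γstar hγstarK
    rw [hdrev] at h
    have h2 : ‖T (γstar - γk) - (z - F γk)‖ ^ 2 ≤ (c₁ * d ^ 2 + δ) ^ 2 :=
      pow_le_pow_left₀ (norm_nonneg _) hT 2
    nlinarith [sq_nonneg ‖T (γk1 - γk) - (z - F γk)‖]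
  clear_value b d
  set s := 8 * c₁ ^ 2 / c₂ ^ 2 with hsdef
  have hs : s * c₂ ^ 2 = 8 * c₁ ^ 2 :=
    div_mul_cancel₀ _ (by positivity)
  have hs0 : 0 ≤ s := by positivity
  have hM1 : s + 1 ≤ M := le_max_left _ _
  have hM2 : (2:ℝ) ≤ M := le_max_right _ _
  clear_value s M
  have hfinal : b ^ 2 * ‖γk1 - γk‖ ^ 2 ≤ b ^ 2 * (M * (d ^ 2 + δ)) := by
    have key : (c₁ * d ^ 2 + δ) ^ 2 + b ^ 2 * d ^ 2 ≤ b ^ 2 * (M * (d ^ 2 + δ)) := by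
      have hs4 : s * c₂ ^ 2 * d ^ 4 = 8 * c₁ ^ 2 * d ^ 4 := by rw [hs]
      have h1 : 2 * c₁ ^ 2 * d ^ 4 ≤ s * b ^ 2 * d ^ 2 := by
        calc 2 * c₁ ^ 2 * d ^ 4 = s * c₂ ^ 2 * d ^ 4 / 4 := by rw [hs]; ring
          _ = s * d ^ 2 * (c₂ ^ 2 / 4 * d ^ 2) := by ring
          _ ≤ s * d ^ 2 * b ^ 2 :=
              mul_le_mul_of_nonneg_left hcd (mul_nonneg hs0 (sq_nonneg d))
          _ = s * b ^ 2 * d ^ 2 := by ring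
      have h2 : 2 * δ ^ 2 ≤ 2 * δ * b ^ 2 := by nlinarith
      have p1 : b ^ 2 * (s + 1) * d ^ 2 ≤ b ^ 2 * M * d ^ 2 :=
        mul_le_mul_of_nonneg_right (mul_le_mul_of_nonneg_left hM1 (sq_nonneg b)) (sq_nonneg d)
      have p2 : b ^ 2 * 2 * δ ≤ b ^ 2 * M * δ :=
        mul_le_mul_of_nonneg_right (mul_le_mul_of_nonneg_left hM2 (sq_nonneg b)) hδ.le
      nlinarith [sq_nonneg (c₁ * d ^ 2 - δ), h1, h2, p1, p2]
    linarith
  exact le_of_mul_le_mul_left hfinal (pow_pos hb0 2)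
end

section
/- Let X be a real Hilbert space, γ* ∈ X, δ ≥ 0, c₄ ≥ 2, c₅ > 0, and b ∈ (0, 1/3]. Define α = c₅(√c₄ + 1), β = δc₅(√c₄ + 1) + √(c₄δ), and assume αb² + β ≤ b. Let (γᵏ) be a sequence in X such that (a) whenever ‖γᵏ − γ*‖ ≤ 1/3, ‖γ^{k+1} − γᵏ‖ ≤ √c₄·(‖γᵏ − γ*‖ + √δ); and (b) for all k ≥ 1, if ‖γ^{k−1} − γ*‖ ≤ b and ‖γᵏ − γ*‖ ≤ b then ‖γᵏ − γ*‖ ≤ c₅(‖γ^{k−1} − γ*‖² + δ). If ‖γ⁰ − γ*‖ ≤ min{b, (b − √(c₄δ))/(√c₄ + 1)} (with the latter quantity positive), then ‖γᵏ − γ*‖ ≤ b for all k ≥ 0. -/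
theorem stmt6 {X : Type*} [NormedAddCommGroup X] [InnerProductSpace ℝ X] [CompleteSpace X]
    (γstar : X) (γ : ℕ → X) (δ c₄ c₅ α β b : ℝ)
    (hδ : 0 ≤ δ) (hc₄ : 2 ≤ c₄) (hc₅ : 0 < c₅)
    (hbpos : 0 < b) (hb3 : b ≤ 1 / 3)
    (hα : α = c₅ * (Real.sqrt c₄ + 1))
    (hβ : β = δ * c₅ * (Real.sqrt c₄ + 1) + Real.sqrt (c₄ * δ))
    (hquad : α * b ^ 2 + β ≤ b)
    (hstep : ∀ k : ℕ, ‖γ k - γstar‖ ≤ 1 / 3 →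
      ‖γ (k + 1) - γ k‖ ≤ Real.sqrt c₄ * (‖γ k - γstar‖ + Real.sqrt δ))
    (hrec : ∀ k : ℕ, 1 ≤ k → ‖γ (k - 1) - γstar‖ ≤ b → ‖γ k - γstar‖ ≤ b →
      ‖γ k - γstar‖ ≤ c₅ * (‖γ (k - 1) - γstar‖ ^ 2 + δ))
    (hrpos : 0 < (b - Real.sqrt (c₄ * δ)) / (Real.sqrt c₄ + 1))
    (hinit : ‖γ 0 - γstar‖ ≤ min b ((b - Real.sqrt (c₄ * δ)) / (Real.sqrt c₄ + 1))) :
    ∀ k : ℕ, ‖γ k - γstar‖ ≤ b := by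
  set sc := Real.sqrt c₄ with hsc
  set s := Real.sqrt (c₄ * δ) with hs
  set r := (b - s) / (sc + 1) with hr
  have hsc1 : 1 ≤ sc := by
    rw [hsc, show (1:ℝ) = Real.sqrt 1 by simp]
    exact Real.sqrt_le_sqrt (by linarith)
  have hscpos : (0:ℝ) < sc + 1 := by linarith
  have hsnn : 0 ≤ s := Real.sqrt_nonneg _
  have hsmul : s = sc * Real.sqrt δ := Real.sqrt_mul (by linarith) δ
  have hbs : 0 < b - s := by
    by_contra h
    have : (b - s) / (sc + 1) ≤ 0 := div_nonpos_of_nonpos_of_nonneg (by linarith) hscpos.le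
    linarith
  have hrb : r ≤ b := by
    have : r ≤ b - s := div_le_self hbs.le (by linarith)
    linarith
  have hcb : c₅ * (b ^ 2 + δ) ≤ r := by
    rw [hr, le_div_iff₀ hscpos]
    have heq : α * b ^ 2 + β = c₅ * (b ^ 2 + δ) * (sc + 1) + s := by
      rw [hα, hβ]; ring
    linarith
  have key : ∀ k, ‖γ k - γstar‖ ≤ min b r := by
    intro k
    induction k with
    | zero => exact hinit
    | succ k ih =>
      have hkb : ‖γ k - γstar‖ ≤ b := ih.trans (min_le_left _ _)
      have hkr : ‖γ k - γstar‖ ≤ r := ih.trans (min_le_right _ _)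
      have h13 : ‖γ k - γstar‖ ≤ 1 / 3 := hkb.trans hb3
      have hst := hstep k h13
      have htri : ‖γ (k + 1) - γstar‖ ≤ ‖γ (k + 1) - γ k‖ + ‖γ k - γstar‖ :=
        norm_sub_le_norm_sub_add_norm_sub _ _ _
      have hk1b : ‖γ (k + 1) - γstar‖ ≤ b := by
        have h1 : ‖γ (k + 1) - γstar‖ ≤ (sc + 1) * ‖γ k - γstar‖ + s := by
          rw [hsmul]; nlinarith [Real.sqrt_nonneg δ]
        have h2 : (sc + 1) * ‖γ k - γstar‖ ≤ (sc + 1) * r :=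
          mul_le_mul_of_nonneg_left hkr hscpos.le
        have h3 : (sc + 1) * r = b - s := by
          rw [hr]; field_simp
        linarith
      have hrecb := hrec (k + 1) (by omega) (by simpa using hkb) hk1b
      simp only [Nat.add_sub_cancel] at hrecb
      have hsq : ‖γ k - γstar‖ ^ 2 ≤ b ^ 2 :=
        pow_le_pow_left₀ (norm_nonneg _) hkb 2
      have hk1r : ‖γ (k + 1) - γstar‖ ≤ r := by
        have : c₅ * (‖γ k - γstar‖ ^ 2 + δ) ≤ c₅ * (b ^ 2 + δ) := by nlinarith
        linarith
      exact le_min hk1b hk1r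
  intro k
  exact (key k).trans (min_le_left _ _)
end

section
/- Let X, Y be real Hilbert spaces, F : X → Y, z ∈ Y, δ > 0, γ*, γᵏ ∈ X, and T : X → Y bounded linear. In the parabolic-type setting assume squared-norm versions of the hypotheses: (i) ‖F(γ*) − z‖² ≤ δ²; (ii) ‖T(γ* − γᵏ) − (F(γ*) − F(γᵏ))‖² ≤ c̄₁‖γ* − γᵏ‖⁴; (iii) ‖F(γᵏ) − F(γ*)‖² ≤ L̄‖γᵏ − γ*‖²; and set βₖ = ‖F(γᵏ) − z‖². If γ^{k+1} minimizes J(γ) = ‖T(γ − γᵏ) − (z − F(γᵏ))‖² + βₖ‖γ − γᵏ‖² over a set containing γ*, and ‖γᵏ − γ*‖ ≤ 1 and δ ≤ 1, then ‖T(γ^{k+1} − γᵏ) − (z − F(γᵏ))‖² ≤ c̄₃(‖γᵏ − γ*‖⁴ + δ²), where c̄₃ = max{2c̄₁ + 2L̄ + 1, 3}. -/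
lemma stmt16_h2d (a d : ℝ) (hd2 : d ^ 2 ≤ 1) (ha0 : 0 ≤ a) :
    2 * (d ^ 2 * a ^ 2) ≤ a ^ 4 + d ^ 2 := by
  nlinarith [mul_nonneg (sq_nonneg d) (sq_nonneg (a ^ 2 - 1)),
    mul_nonneg (by linarith : (0:ℝ) ≤ 1 - d ^ 2) (pow_nonneg ha0 4)]


theorem stmt16 {X Y : Type*} [NormedAddCommGroup X] [InnerProductSpace ℝ X] [CompleteSpace X]
    [NormedAddCommGroup Y] [InnerProductSpace ℝ Y] [CompleteSpace Y]
    (F : X → Y) (T : X →L[ℝ] Y) (z : Y) (δ c₁bar Lbar : ℝ)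
    (γstar γk γk1 : X) (K : Set X)
    (hδ : 0 < δ) (hδ1 : δ ≤ 1)
    (hnoise : ‖F γstar - z‖ ^ 2 ≤ δ ^ 2)
    (htaylor : ‖T (γstar - γk) - (F γstar - F γk)‖ ^ 2 ≤ c₁bar * ‖γstar - γk‖ ^ 4)
    (hlip : ‖F γk - F γstar‖ ^ 2 ≤ Lbar * ‖γk - γstar‖ ^ 2)
    (hsmall : ‖γk - γstar‖ ≤ 1)
    (hγstarK : γstar ∈ K) (hγk1K : γk1 ∈ K)
    (hmin : ∀ γ ∈ K,
      ‖T (γk1 - γk) - (z - F γk)‖ ^ 2 + ‖F γk - z‖ ^ 2 * ‖γk1 - γk‖ ^ 2 ≤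
        ‖T (γ - γk) - (z - F γk)‖ ^ 2 + ‖F γk - z‖ ^ 2 * ‖γ - γk‖ ^ 2) :
    ‖T (γk1 - γk) - (z - F γk)‖ ^ 2 ≤
      max (2 * c₁bar + 2 * Lbar + 1) 3 * (‖γk - γstar‖ ^ 4 + δ ^ 2) := by
  have h1 := hmin γstar hγstarK
  have hrev : ‖γstar - γk‖ = ‖γk - γstar‖ := norm_sub_rev _ _
  set a := ‖γk - γstar‖ with ha
  have ha0 : 0 ≤ a := norm_nonneg _
  have hdecomp : T (γstar - γk) - (z - F γk)
      = (T (γstar - γk) - (F γstar - F γk)) + (F γstar - z) := by abel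
  have hA : ‖T (γstar - γk) - (z - F γk)‖ ≤
      ‖T (γstar - γk) - (F γstar - F γk)‖ + ‖F γstar - z‖ := by
    rw [hdecomp]; exact norm_add_le _ _
  have hBeq : F γk - z = (F γk - F γstar) + (F γstar - z) := by abel
  have hB : ‖F γk - z‖ ≤ ‖F γk - F γstar‖ + ‖F γstar - z‖ := by
    rw [hBeq]; exact norm_add_le _ _
  have hA2 : ‖T (γstar - γk) - (z - F γk)‖ ^ 2 ≤ 2 * (c₁bar * a ^ 4) + 2 * δ ^ 2 := by
    rw [hrev] at htaylor
    nlinarith [norm_nonneg (T (γstar - γk) - (z - F γk)),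
      norm_nonneg (T (γstar - γk) - (F γstar - F γk)), norm_nonneg (F γstar - z),
      sq_nonneg (‖T (γstar - γk) - (F γstar - F γk)‖ - ‖F γstar - z‖)]
  have hB2 : ‖F γk - z‖ ^ 2 ≤ 2 * (Lbar * a ^ 2) + 2 * δ ^ 2 := by
    nlinarith [norm_nonneg (F γk - z), norm_nonneg (F γk - F γstar), norm_nonneg (F γstar - z),
      sq_nonneg (‖F γk - F γstar‖ - ‖F γstar - z‖)]
  have hmax1 : 2 * c₁bar + 2 * Lbar + 1 ≤ max (2 * c₁bar + 2 * Lbar + 1) 3 := le_max_left _ _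
  have hmax2 : (3 : ℝ) ≤ max (2 * c₁bar + 2 * Lbar + 1) 3 := le_max_right _ _
  have hgoal : ‖T (γk1 - γk) - (z - F γk)‖ ^ 2 ≤
      ‖T (γstar - γk) - (z - F γk)‖ ^ 2 + ‖F γk - z‖ ^ 2 * a ^ 2 := by
    rw [hrev] at h1
    nlinarith [mul_nonneg (sq_nonneg ‖F γk - z‖) (sq_nonneg ‖γk1 - γk‖)]
  have hq : ‖F γk - z‖ ^ 2 * a ^ 2 ≤ (2 * (Lbar * a ^ 2) + 2 * δ ^ 2) * a ^ 2 := by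
    have := sq_nonneg a
    nlinarith
  have hδ2 : δ ^ 2 ≤ 1 := pow_le_one₀ hδ.le hδ1
  have h2δ : 2 * (δ ^ 2 * a ^ 2) ≤ a ^ 4 + δ ^ 2 := stmt16_h2d a δ hδ2 ha0
  have hq' : ‖F γk - z‖ ^ 2 * a ^ 2 ≤ 2 * (Lbar * a ^ 4) + 2 * (δ ^ 2 * a ^ 2) := by
    calc ‖F γk - z‖ ^ 2 * a ^ 2 ≤ (2 * (Lbar * a ^ 2) + 2 * δ ^ 2) * a ^ 2 :=
          mul_le_mul_of_nonneg_right hB2 (sq_nonneg a)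
      _ = 2 * (Lbar * a ^ 4) + 2 * (δ ^ 2 * a ^ 2) := by ring
  have key : ‖T (γk1 - γk) - (z - F γk)‖ ^ 2 ≤
      (2 * c₁bar + 2 * Lbar + 1) * a ^ 4 + 3 * δ ^ 2 := by
    linarith [hgoal, hA2, hq', h2δ]
  have t1 : (2 * c₁bar + 2 * Lbar + 1) * a ^ 4 ≤ max (2 * c₁bar + 2 * Lbar + 1) 3 * a ^ 4 :=
    mul_le_mul_of_nonneg_right hmax1 (pow_nonneg ha0 4)
  have t2 : (3 : ℝ) * δ ^ 2 ≤ max (2 * c₁bar + 2 * Lbar + 1) 3 * δ ^ 2 :=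
    mul_le_mul_of_nonneg_right hmax2 (sq_nonneg δ)
  rw [mul_add]
  linarith [key, t1, t2]
end
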